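/- arXiv:1111.1999 — 2 statements merged into one kernel-verified Lean document; each statement's English description precedes it below -/
import Mathlib

section
/- For every m n : ℕ and every letter a₁ : Fin m there exist computable functions f₁ f₂ : (Fin m → List (Fin m)) × (Fin m → List (Fin n)) × List (Fin n) → Bool such that for every triple (φ, ψ, u) for which φ is prolongable over a₁ and the word W obtained by applying ψ to φ^∞(a₁) is an infinite word: f₁ (φ, ψ, u) = true if and only if u is a factor of W, and f₂ (φ, ψ, u) = true if and only if u occurs in W at infinitely many starting positions. -/
/-!
For a word `w` and a length `L`, consider the pairs `(S, x)` with `|x| ≤ L` such that `x` is a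
factor of `w` once the letters outside `S` are deleted. After deleting the letters that `θ` erases,
a shortest stretch of `w` whose image covers a factor `x` of `θ(w)` is no longer than `x`; hence
these states for `φ(w)` are a function of the states for `w`, and they decide which words of
length `≤ L` are factors of `ψ(w)`.

Along the prefixes `φ^k(a₁)` of the fixed point the state sets increase, so they become constant
after at most as many steps as there are states: `u` is a factor of `W` iff it is a factor of
`ψ(φ^K(a₁))` for an explicit `K`. Writing the fixed point as `a₁ t`, the word `u` occurs infinitely
often iff it is a factor of `ψ(φ^k(t))` for every `k`; these state sets decrease and are constant
from `K` on as well. The remaining factor problem for `ψ(φ^K(t))` is the first one again, for the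
substitution obtained by replacing `a₁` with a fresh marker letter.
-/

/-- Extension of a morphism `φ : A → List B` to finite words: `φ†(w) = (w.map φ).flatten`. -/
def applyMorph {A B : Type*} (φ : A → List B) (w : List A) : List B :=
  (w.map φ).flatten

/-- The finite word `v` occurs in the infinite word `W` at starting position `i`. -/
def OccursAt {A : Type*} (v : List A) (W : ℕ → A) (i : ℕ) : Prop :=
  ∀ (j : ℕ) (hj : j < v.length), W (i + j) = v.get ⟨j, hj⟩

/-- The finite word `v` is a factor of the infinite word `W`. -/
def FactorOf {A : Type*} (v : List A) (W : ℕ → A) : Prop :=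
  ∃ i, OccursAt v W i

/-- The finite word `v` is a prefix of the infinite word `W`. -/
def PrefixOf {A : Type*} (v : List A) (W : ℕ → A) : Prop :=
  OccursAt v W 0

/-- `W` is uniformly recurrent. -/
def UniformlyRecurrent {A : Type*} (W : ℕ → A) : Prop :=
  ∀ u, FactorOf u W → ∃ N, ∀ v, FactorOf v W → v.length = N → u <:+: v

/-- `W` is eventually periodic. -/
def EventuallyPeriodic {A : Type*} (W : ℕ → A) : Prop :=
  ∃ k t : ℕ, 1 ≤ t ∧ ∀ i, k ≤ i → W (i + t) = W i

/-- The substitution `φ` is prolongable over the letter `a₁`. -/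
def Prolongable {A : Type*} (φ : A → List A) (a₁ : A) : Prop :=
  ∃ v, φ a₁ = a₁ :: v ∧ ∀ k : ℕ, (applyMorph φ)^[k] v ≠ []

/-- The morphism `φ` is nonerasing. -/
def Nonerasing {A B : Type*} (φ : A → List B) : Prop :=
  ∀ a, φ a ≠ []

/-- `X` is the fixed point `φ^∞(a₁)`: every `φ^n([a₁])` is a prefix of `X`. -/
def IsFixedPoint {A : Type*} (φ : A → List A) (a₁ : A) (X : ℕ → A) : Prop :=
  ∀ n : ℕ, PrefixOf ((applyMorph φ)^[n] [a₁]) X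

/-- `W` is the infinite word `ψ(φ^∞(a₁))`: the words `ψ(φ^n([a₁]))` have unbounded
length and each of them is a prefix of `W`. -/
def IsMorphicWord {A B : Type*} (φ : A → List A) (ψ : A → List B) (a₁ : A)
    (W : ℕ → B) : Prop :=
  (∀ N : ℕ, ∃ k : ℕ, N ≤ (applyMorph ψ ((applyMorph φ)^[k] [a₁])).length) ∧
  ∀ k : ℕ, PrefixOf (applyMorph ψ ((applyMorph φ)^[k] [a₁])) W

/-- The letter `a` is `φ`-growing: `n ↦ (φ^n [a]).length` is unbounded. -/
def GrowingLetter {A : Type*} (φ : A → List A) (a : A) : Prop :=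
  ∀ N : ℕ, ∃ n : ℕ, N ≤ ((applyMorph φ)^[n] [a]).length

/-- The finite word `w` is `φ`-bounded: the sequence `n ↦ φ^n(w)` is eventually periodic. -/
def PhiBounded {A : Type*} (φ : A → List A) (w : List A) : Prop :=
  ∃ n₀ p : ℕ, 1 ≤ p ∧ ∀ n, n₀ ≤ n → (applyMorph φ)^[n + p] w = (applyMorph φ)^[n] w

/-- Letter `a` has growth order `(d, θ)` with respect to `φ`. -/
def HasGrowthOrder {A : Type*} (φ : A → List A) (a : A) (d : ℕ) (θ : ℝ) : Prop :=
  1 ≤ θ ∧ ∃ c C : ℝ, 0 < c ∧ c ≤ C ∧ ∀ n : ℕ, 1 ≤ n →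
    c * (n : ℝ) ^ d * θ ^ n ≤ (((applyMorph φ)^[n] [a]).length : ℝ) ∧
    (((applyMorph φ)^[n] [a]).length : ℝ) ≤ C * (n : ℝ) ^ d * θ ^ n

/-- The substitution `φ` is primitive. -/
def PrimitiveSubst {A : Type*} (φ : A → List A) : Prop :=
  ∃ k : ℕ, 1 ≤ k ∧ ∀ a b : A, b ∈ (applyMorph φ)^[k] [a]

/-- `v` is a cyclic shift of `u`. -/
def IsCyclicShift {A : Type*} (v u : List A) : Prop :=
  ∃ x y : List A, u = x ++ y ∧ v = y ++ x

/-- `W` is purely periodic with (nonempty) period `u`. -/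
def PurelyPeriodicWith {A : Type*} (W : ℕ → A) (u : List A) : Prop :=
  ∃ hu : u ≠ [], ∀ i : ℕ, W i = u.get ⟨i % u.length, Nat.mod_lt i (List.length_pos_of_ne_nil hu)⟩

/-- `W` is recurrent: every factor occurs at arbitrarily large starting positions. -/
def RecurrentWord {A : Type*} (W : ℕ → A) : Prop :=
  ∀ u, FactorOf u W → ∀ N : ℕ, ∃ i, N ≤ i ∧ OccursAt u W i

/-- The letter `a` is recurrent: it occurs in some `φ^k [a]`, `k ≥ 1`. -/
def RecurrentLetter {A : Type*} (φ : A → List A) (a : A) : Prop :=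
  ∃ k : ℕ, 1 ≤ k ∧ a ∈ (applyMorph φ)^[k] [a]


section Morphisms

variable {A B C : Type*}

@[simp] theorem applyMorph_nil (θ : A → List B) : applyMorph θ [] = [] := rfl

@[simp] theorem applyMorph_cons (θ : A → List B) (a : A) (w : List A) :
    applyMorph θ (a :: w) = θ a ++ applyMorph θ w := List.flatMap_cons

@[simp] theorem applyMorph_append (θ : A → List B) (w₁ w₂ : List A) :
    applyMorph θ (w₁ ++ w₂) = applyMorph θ w₁ ++ applyMorph θ w₂ := List.flatMap_append

@[simp] theorem applyMorph_singleton (θ : A → List B) (a : A) : applyMorph θ [a] = θ a := by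
  simp [applyMorph]

theorem applyMorph_applyMorph (ψ : B → List C) (θ : A → List B) (w : List A) :
    applyMorph ψ (applyMorph θ w) = applyMorph (fun a => applyMorph ψ (θ a)) w :=
  List.flatMap_assoc

theorem applyMorph_map (θ : B → List C) (g : A → B) (w : List A) :
    applyMorph θ (w.map g) = applyMorph (θ ∘ g) w :=
  List.flatMap_map g θ w

theorem map_applyMorph (g : B → C) (θ : A → List B) (w : List A) :
    (applyMorph θ w).map g = applyMorph (fun a => (θ a).map g) w :=
  List.map_flatMap

theorem filter_applyMorph (p : B → Bool) (θ : A → List B) (w : List A) :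
    (applyMorph θ w).filter p = applyMorph (fun a => (θ a).filter p) w :=
  List.filter_flatMap

theorem List.IsInfix.applyMorph (θ : A → List B) {w₁ w₂ : List A} (h : w₁ <:+: w₂) :
    applyMorph θ w₁ <:+: applyMorph θ w₂ := by
  obtain ⟨p, s, rfl⟩ := h
  simp only [applyMorph_append]
  exact List.infix_append _ _ _

theorem length_le_length_applyMorph {θ : A → List B} {w : List A} (hθ : ∀ a ∈ w, θ a ≠ []) :
    w.length ≤ (applyMorph θ w).length := by
  induction w with
  | nil => simp
  | cons a w ih =>
    have ha := List.length_pos_iff.mpr (hθ a List.mem_cons_self)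
    have hw := ih fun b hb => hθ b (List.mem_cons_of_mem a hb)
    simp only [applyMorph_cons, List.length_cons, List.length_append]
    omega

theorem applyMorph_iterate_nil (φ : A → List A) (k : ℕ) : (applyMorph φ)^[k] [] = [] :=
  Function.iterate_fixed rfl k

theorem applyMorph_iterate_append (φ : A → List A) (k : ℕ) (w₁ w₂ : List A) :
    (applyMorph φ)^[k] (w₁ ++ w₂) = (applyMorph φ)^[k] w₁ ++ (applyMorph φ)^[k] w₂ := by
  induction k generalizing w₁ w₂ with
  | zero => rfl
  | succ k ih => simp only [Function.iterate_succ_apply, applyMorph_append, ih]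

theorem applyMorph_iterate_eq (φ : A → List A) (k : ℕ) (w : List A) :
    (applyMorph φ)^[k] w = applyMorph (fun a => (applyMorph φ)^[k] [a]) w := by
  induction w with
  | nil => exact applyMorph_iterate_nil φ k
  | cons a w ih => rw [← List.singleton_append, applyMorph_iterate_append, ih]; simp

end Morphisms

theorem List.IsInfix.of_append_eq_append {A : Type*} {p x s l r : List A}
    (h : p ++ x ++ s = l ++ r) (hl : l.length ≤ p.length) : x <:+: r := by
  have := congrArg (List.drop l.length) h
  rw [List.append_assoc, List.drop_append_of_le_length hl, List.drop_left] at this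
  exact ⟨_, s, by rw [← this, List.append_assoc]⟩

theorem List.length_add_two_le_of_infix_of_not_infix {A : Type*} {x p m s : List A}
    (h : x <:+: p ++ m ++ s) (hpm : ¬ x <:+: p ++ m) (hms : ¬ x <:+: m ++ s) :
    m.length + 2 ≤ x.length := by
  obtain ⟨α, β, h⟩ := h
  have hα : α.length < p.length := by
    by_contra! hle
    exact hms (List.IsInfix.of_append_eq_append (h.trans (List.append_assoc _ _ _)) hle)
  have hβ : β.length < s.length := by
    by_contra! hle
    refine hpm (List.reverse_infix.mp (List.IsInfix.of_append_eq_append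
      (p := β.reverse) (s := α.reverse) (l := s.reverse) ?_ (by simpa using hle)))
    simpa using congrArg List.reverse h
  have := congrArg List.length h
  simp only [List.length_append] at this
  omega

theorem List.infix_iff_exists_take_drop {A : Type*} {u w : List A} :
    u <:+: w ↔ ∃ i ∈ List.range (w.length + 1), u = (w.drop i).take u.length := by
  simp only [List.mem_range, Nat.lt_succ_iff, ← List.prefix_iff_eq_take]
  constructor
  · intro h
    obtain ⟨t, hut, hts⟩ := List.infix_iff_prefix_suffix.mp h
    rw [List.suffix_iff_eq_drop] at hts
    exact ⟨_, Nat.sub_le _ _, hts ▸ hut⟩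
  · rintro ⟨i, -, hi⟩
    exact hi.isInfix.trans (List.drop_suffix i w).isInfix

section Spanning

variable {A B : Type*}

/-- A shortest cover `z` of `x` is at most as long as `x`: otherwise its first and last letters
both contribute to `x`, and each letter strictly between them contributes at least one letter. -/
theorem exists_short_infix_of_infix_applyMorph {θ : A → List B} {w : List A} {x : List B}
    (hθ : ∀ a ∈ w, θ a ≠ []) (hx : x <:+: applyMorph θ w) :
    ∃ z, z <:+: w ∧ z.length ≤ x.length ∧ x <:+: applyMorph θ z := by
  induction' hn : w.length using Nat.strong_induction_on with n ih generalizing w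
  by_cases hw : w.length ≤ x.length
  · exact ⟨w, List.infix_rfl, hw, hx⟩
  rcases eq_or_ne x [] with rfl | hx₀
  · exact ⟨[], List.nil_infix, le_rfl, List.nil_infix⟩
  obtain _ | ⟨a, w'⟩ := w
  · simp at hw
  obtain rfl | ⟨m, b, rfl⟩ := w'.eq_nil_or_concat'
  · simp only [List.length_singleton, not_le, Nat.lt_one_iff, List.length_eq_zero_iff] at hw
    exact absurd hw hx₀
  have hinit : a :: m <:+: a :: (m ++ [b]) := (List.prefix_append (a :: m) [b]).isInfix
  have htail : m ++ [b] <:+: a :: (m ++ [b]) := (List.suffix_cons a _).isInfix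
  by_cases h₁ : x <:+: applyMorph θ (a :: m)
  · obtain ⟨z, hz, hzx, hxz⟩ :=
      ih _ (by simp [← hn]) (fun c hc => hθ c (hinit.subset hc)) h₁ rfl
    exact ⟨z, hz.trans hinit, hzx, hxz⟩
  by_cases h₂ : x <:+: applyMorph θ (m ++ [b])
  · obtain ⟨z, hz, hzx, hxz⟩ :=
      ih _ (by simp [← hn]) (fun c hc => hθ c (htail.subset hc)) h₂ rfl
    exact ⟨z, hz.trans htail, hzx, hxz⟩
  have hm := length_le_length_applyMorph fun c hc =>
    hθ c (htail.subset (List.mem_append_left _ hc))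
  have hstraddle := List.length_add_two_le_of_infix_of_not_infix (p := θ a) (m := applyMorph θ m)
    (s := θ b) (by simpa using hx) (by simpa using h₁) (by simpa using h₂)
  simp only [List.length_cons, List.length_append, List.length_nil] at hw
  omega

def notErased (θ : A → List B) (a : A) : Bool := !(θ a).isEmpty

theorem applyMorph_filter_notErased (θ : A → List B) (w : List A) :
    applyMorph θ (w.filter (notErased θ)) = applyMorph θ w := by
  induction w with
  | nil => rfl
  | cons a w ih => by_cases h : θ a = [] <;> simp [List.filter_cons, notErased, h, ih]

theorem infix_applyMorph_iff {θ : A → List B} {w : List A} {x : List B} {L : ℕ}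
    (hx : x.length ≤ L) :
    x <:+: applyMorph θ w ↔
      ∃ z, z.length ≤ L ∧ z <:+: w.filter (notErased θ) ∧ x <:+: applyMorph θ z := by
  constructor
  · intro h
    rw [← applyMorph_filter_notErased] at h
    obtain ⟨z, hz, hzx, hxz⟩ := exists_short_infix_of_infix_applyMorph
      (fun a ha => by simpa [notErased] using (List.mem_filter.mp ha).2) h
    exact ⟨z, hzx.trans hx, hz, hxz⟩
  · rintro ⟨z, -, hz, hxz⟩
    exact hxz.trans (applyMorph_filter_notErased θ w ▸ hz.applyMorph θ)

end Spanning

section Stabilization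

theorem iterate_eq_iterate_of_bounded_measure {α : Type*} (F : α → α) (x : α) (μ : α → ℕ)
    {K : ℕ} (hμ : ∀ k, μ (F^[k] x) ≤ K)
    (hstep : ∀ k, F^[k + 1] x ≠ F^[k] x → μ (F^[k] x) < μ (F^[k + 1] x)) {k : ℕ} (hk : K ≤ k) :
    F^[k] x = F^[K] x := by
  obtain ⟨n, hn, hfix⟩ : ∃ n ≤ K, F^[n + 1] x = F^[n] x := by
    by_contra! hne
    have hgrow : ∀ n ≤ K + 1, n ≤ μ (F^[n] x) := by
      intro n hn
      induction n with
      | zero => exact Nat.zero_le _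
      | succ n ih => have := hstep n (hne n (by omega)); have := ih (by omega); omega
    have := hgrow (K + 1) le_rfl
    have := hμ (K + 1)
    omega
  rw [Function.iterate_succ_apply'] at hfix
  have hconst : ∀ j, n ≤ j → F^[j] x = F^[n] x := by
    intro j hj
    obtain ⟨d, rfl⟩ := Nat.exists_eq_add_of_le hj
    rw [add_comm, Function.iterate_add_apply, Function.iterate_fixed hfix]
  rw [hconst k (hn.trans hk), hconst K hn]

variable {Γ : Type*} {G : Set Γ} {F : Set Γ → Set Γ} {s : Set Γ} {K : ℕ}

theorem iterate_subset_iterate_of_monotone (hG : G.Finite) (hsub : ∀ k, F^[k] s ⊆ G)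
    (hmono : Monotone (F^[·] s)) (hK : G.ncard ≤ K) (k : ℕ) : F^[k] s ⊆ F^[K] s := by
  rcases le_total k K with hk | hk
  · exact hmono hk
  refine (iterate_eq_iterate_of_bounded_measure F s Set.ncard
    (fun k => (Set.ncard_le_ncard (hsub k) hG).trans hK) (fun k hne => ?_) hk).le
  exact Set.ncard_lt_ncard ((hmono k.le_succ).ssubset_of_ne hne.symm) (hG.subset (hsub _))

theorem iterate_subset_iterate_of_antitone (hG : G.Finite) (hsub : ∀ k, F^[k] s ⊆ G)
    (hanti : Antitone (F^[·] s)) (hK : G.ncard ≤ K) (k : ℕ) : F^[K] s ⊆ F^[k] s := by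
  rcases le_total k K with hk | hk
  · exact hanti hk
  refine (iterate_eq_iterate_of_bounded_measure F s (fun T => K - T.ncard)
    (fun _ => Nat.sub_le _ _) (fun k hne => ?_) hk).ge
  have hlt : (F^[k + 1] s).ncard < (F^[k] s).ncard :=
    Set.ncard_lt_ncard ((hanti k.le_succ).ssubset_of_ne hne) (hG.subset (hsub k))
  have hle := (Set.ncard_le_ncard (hsub k) hG).trans hK
  omega

end Stabilization

section FactorStates

variable {A B ι : Type*}

/-- These states determine which words of length `≤ L` are factors of the `ψ (w j)`, and under
`w ↦ φ ∘ w` they evolve by a map that does not depend on `w`. -/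
def factorStates (L : ℕ) (w : ι → List A) : Set ((A → Bool) × List A) :=
  {p | p.2.length ≤ L ∧ ∃ j, p.2 <:+: (w j).filter p.1}

def factorStep (φ : A → List A) (L : ℕ) (T : Set ((A → Bool) × List A)) :
    Set ((A → Bool) × List A) :=
  {p | p.2.length ≤ L ∧ ∃ z, (notErased fun a => (φ a).filter p.1, z) ∈ T ∧
    p.2 <:+: (applyMorph φ z).filter p.1}

theorem exists_infix_applyMorph_iff (ψ : A → List B) (w : ι → List A) (u : List B) :
    (∃ j, u <:+: applyMorph ψ (w j)) ↔
      ∃ z, (notErased ψ, z) ∈ factorStates u.length w ∧ u <:+: applyMorph ψ z := by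
  constructor
  · rintro ⟨j, huj⟩
    obtain ⟨z, hz, hzj, huz⟩ := (infix_applyMorph_iff le_rfl).mp huj
    exact ⟨z, ⟨hz, j, hzj⟩, huz⟩
  · rintro ⟨z, ⟨hz, j, hzj⟩, huz⟩
    exact ⟨j, (infix_applyMorph_iff le_rfl).mpr ⟨z, hz, hzj, huz⟩⟩

theorem factorStates_applyMorph (φ : A → List A) (L : ℕ) (w : ι → List A) :
    factorStates L (applyMorph φ ∘ w) = factorStep φ L (factorStates L w) := by
  ext ⟨S, x⟩
  simp only [factorStates, factorStep, Set.mem_ofPred_eq, Function.comp_apply,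
    filter_applyMorph]
  refine and_congr_right fun hx => ⟨?_, ?_⟩
  · rintro ⟨j, hxj⟩
    obtain ⟨z, hz, hzj, hxz⟩ := (infix_applyMorph_iff hx).mp hxj
    exact ⟨z, ⟨hz, j, hzj⟩, hxz⟩
  · rintro ⟨z, ⟨hz, j, hzj⟩, hxz⟩
    exact ⟨j, (infix_applyMorph_iff hx).mpr ⟨z, hz, hzj, hxz⟩⟩

theorem factorStates_iterate (φ : A → List A) (L : ℕ) (w : ι → List A) (k : ℕ) :
    factorStates L (fun j => (applyMorph φ)^[k] (w j)) =
      (factorStep φ L)^[k] (factorStates L w) := by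
  induction k with
  | zero => rfl
  | succ k ih =>
    rw [Function.iterate_succ_apply', ← ih, ← factorStates_applyMorph]
    simp only [Function.iterate_succ_apply']
    rfl

theorem iterate_factorStep_factorStates_subset (φ : A → List A) (L : ℕ) (w : ι → List A)
    (k : ℕ) : (factorStep φ L)^[k] (factorStates L w) ⊆ {p | p.2.length ≤ L} := by
  rw [← factorStates_iterate]
  exact fun _ hp => hp.1

theorem factorStep_mono (φ : A → List A) (L : ℕ) : Monotone (factorStep φ L) :=
  fun _ _ hT _ ⟨hx, z, hz, hxz⟩ => ⟨hx, z, hT hz, hxz⟩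

theorem factorStates_mono {L : ℕ} {w : ι → List A} {w' : ι → List A}
    (h : ∀ i, ∃ j, w i <:+: w' j) : factorStates L w ⊆ factorStates L w' := by
  rintro ⟨S, x⟩ ⟨hx, i, hxi⟩
  obtain ⟨j, hj⟩ := h i
  exact ⟨hx, j, hxi.trans (hj.filter S)⟩

def stateBound (A : Type*) [Fintype A] (L : ℕ) : ℕ :=
  2 ^ Fintype.card A * (Fintype.card A + 1) ^ (L + 1)

theorem finite_and_ncard_le_stateBound [Fintype A] (L : ℕ) :
    {p : (A → Bool) × List A | p.2.length ≤ L}.Finite ∧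
      {p : (A → Bool) × List A | p.2.length ≤ L}.ncard ≤ stateBound A L := by
  refine ⟨(Set.finite_univ.prod (List.finite_length_le A L)).subset fun p hp => ⟨trivial, hp⟩, ?_⟩
  have hinj : Set.InjOn (fun p : (A → Bool) × List A => (p.1, fun i : Fin (L + 1) => p.2[i.1]?))
      {p | p.2.length ≤ L} := by
    rintro ⟨S, x⟩ hx ⟨S', x'⟩ hx' heq
    change x.length ≤ L at hx
    change x'.length ≤ L at hx'
    simp only [Prod.mk.injEq, funext_iff] at heq ⊢
    refine ⟨heq.1, List.ext_getElem? fun i => ?_⟩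
    rcases lt_or_ge i (L + 1) with hi | hi
    · exact heq.2 ⟨i, hi⟩
    · rw [List.getElem?_eq_none (by omega), List.getElem?_eq_none (by omega)]
  refine (Set.ncard_le_ncard_of_injOn _ (fun _ _ => Set.mem_univ _) hinj).trans_eq ?_
  simp [Set.ncard_univ, Nat.card_fun, stateBound, Nat.card_eq_fintype_card]

variable [Fintype A] (φ : A → List A) (ψ : A → List B) (u : List B)

theorem exists_infix_iterate_iff_of_infix_applyMorph {w₀ : List A}
    (hw₀ : w₀ <:+: applyMorph φ w₀) :
    (∃ k, u <:+: applyMorph ψ ((applyMorph φ)^[k] w₀)) ↔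
      u <:+: applyMorph ψ ((applyMorph φ)^[stateBound A u.length] w₀) := by
  obtain ⟨hG, hK⟩ := finite_and_ncard_le_stateBound (A := A) u.length
  have hsub := iterate_subset_iterate_of_monotone hG
    (iterate_factorStep_factorStates_subset φ _ (fun _ : Unit => w₀))
    ((factorStep_mono φ _).monotone_iterate_of_le_map (by
      rw [← factorStates_applyMorph]
      exact factorStates_mono fun _ => ⟨(), hw₀⟩)) hK
  have key := fun k => exists_infix_applyMorph_iff ψ (fun _ : Unit => (applyMorph φ)^[k] w₀) u
  simp only [exists_const, factorStates_iterate] at key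
  simp only [key]
  exact ⟨fun ⟨k, z, hz, huz⟩ => ⟨z, hsub k hz, huz⟩, fun h => ⟨_, h⟩⟩

theorem forall_exists_infix_iterate_iff_of_applyMorph_infix (w : ι → List A)
    (hw : ∀ i, ∃ j, applyMorph φ (w i) <:+: w j) :
    (∀ k, ∃ j, u <:+: applyMorph ψ ((applyMorph φ)^[k] (w j))) ↔
      ∃ j, u <:+: applyMorph ψ ((applyMorph φ)^[stateBound A u.length] (w j)) := by
  obtain ⟨hG, hK⟩ := finite_and_ncard_le_stateBound (A := A) u.length
  have hsub := iterate_subset_iterate_of_antitone hG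
    (iterate_factorStep_factorStates_subset φ _ w)
    ((factorStep_mono φ _).antitone_iterate_of_map_le (by
      rw [← factorStates_applyMorph]
      exact factorStates_mono hw)) hK
  simp only [exists_infix_applyMorph_iff ψ _ u, factorStates_iterate]
  exact ⟨fun h => h _, fun ⟨z, hz, huz⟩ k => ⟨z, hsub k hz, huz⟩⟩

end FactorStates

section InfiniteWords

variable {B : Type*} {W : ℕ → B}

theorem PrefixOf.occursAt_length {p u s : List B} (h : PrefixOf (p ++ u ++ s) W) :
    OccursAt u W p.length := by
  intro j hj
  have := h (p.length + j) (by simp; omega)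
  rw [zero_add] at this
  simp only [this, List.get_eq_getElem, List.append_assoc]
  rw [List.getElem_append_right (by omega), List.getElem_append_left (by simpa using hj)]
  simp

theorem PrefixOf.exists_eq_append_of_occursAt {w u : List B} {i : ℕ} (hw : PrefixOf w W)
    (hu : OccursAt u W i) (hle : i + u.length ≤ w.length) :
    ∃ p s, w = p ++ u ++ s ∧ p.length = i := by
  have hslice : (w.drop i).take u.length = u := by
    refine List.ext_getElem (by simp; omega) fun j h₁ h₂ => ?_
    have hwj := hw (i + j) (by omega)
    have huj := hu j h₂
    simp only [zero_add, List.get_eq_getElem] at hwj huj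
    simp [← hwj, huj]
  refine ⟨w.take i, w.drop (i + u.length), ?_, by simp; omega⟩
  conv_lhs => rw [← List.take_append_drop i w, ← List.take_append_drop u.length (w.drop i)]
  rw [hslice, List.drop_drop, List.append_assoc]

theorem factorOf_iff_exists_infix {P : ℕ → List B} (hP : ∀ k, PrefixOf (P k) W)
    (hlen : ∀ N, ∃ k, N ≤ (P k).length) {u : List B} : FactorOf u W ↔ ∃ k, u <:+: P k := by
  constructor
  · rintro ⟨i, hi⟩
    obtain ⟨k, hk⟩ := hlen (i + u.length)
    obtain ⟨p, s, hps, -⟩ := (hP k).exists_eq_append_of_occursAt hi hk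
    exact ⟨k, p, s, hps.symm⟩
  · rintro ⟨k, p, s, hps⟩
    exact ⟨p.length, (hps ▸ hP k).occursAt_length⟩

theorem infinite_occursAt_iff {P : ℕ → List B} {Q : ℕ → ℕ → List B}
    (hPQ : ∀ k j, PrefixOf (P k ++ Q k j) W) (hP : ∀ N, ∃ k, N ≤ (P k).length)
    (hQ : ∀ k N, ∃ j, N ≤ (P k ++ Q k j).length) {u : List B} :
    {i | OccursAt u W i}.Infinite ↔ ∀ k, ∃ j, u <:+: Q k j := by
  constructor
  · intro h k
    obtain ⟨i, hi, hki⟩ := h.exists_gt (P k).length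
    obtain ⟨j, hj⟩ := hQ k (i + u.length)
    obtain ⟨p, s, hps, rfl⟩ := (hPQ k j).exists_eq_append_of_occursAt hi hj
    exact ⟨j, List.IsInfix.of_append_eq_append hps.symm hki.le⟩
  · intro h
    refine Set.infinite_of_forall_exists_gt fun N => ?_
    obtain ⟨k, hk⟩ := hP (N + 1)
    obtain ⟨j, p, s, hps⟩ := h k
    refine ⟨(P k ++ p).length, ?_, by simp; omega⟩
    have := hPQ k j
    rw [← hps] at this
    exact PrefixOf.occursAt_length (by simpa only [List.append_assoc] using this)

end InfiniteWords

section Prolongable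

variable {A B : Type*} {φ : A → List A} {a₁ : A} {v : List A}

theorem iterate_singleton_eq_cons_tail (hφ : φ a₁ = a₁ :: v) (j : ℕ) :
    (applyMorph φ)^[j] [a₁] = a₁ :: ((applyMorph φ)^[j] [a₁]).tail := by
  induction j with
  | zero => rfl
  | succ j ih => rw [Function.iterate_succ_apply', ih]; simp [hφ]

theorem tail_iterate_succ_singleton (hφ : φ a₁ = a₁ :: v) (j : ℕ) :
    ((applyMorph φ)^[j + 1] [a₁]).tail = v ++ applyMorph φ ((applyMorph φ)^[j] [a₁]).tail := by
  conv_lhs => rw [Function.iterate_succ_apply', iterate_singleton_eq_cons_tail hφ j]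
  simp [hφ]

theorem iterate_add_singleton (hφ : φ a₁ = a₁ :: v) (k j : ℕ) :
    (applyMorph φ)^[k + j] [a₁] =
      (applyMorph φ)^[k] [a₁] ++ (applyMorph φ)^[k] ((applyMorph φ)^[j] [a₁]).tail := by
  conv_lhs => rw [Function.iterate_add_apply, iterate_singleton_eq_cons_tail hφ j,
    ← List.singleton_append, applyMorph_iterate_append]

/-- `φ` with a fresh marker letter `none` in place of `a₁`: its iterates on `[none]` are the tails
of the `φ^j [a₁]`, so factors of the fixed point minus its first letter become factors of a
fixed point. -/
def markedSubst (φ : A → List A) (v : List A) : Option A → List (Option A) :=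
  fun o => o.elim (none :: v.map some) fun a => (φ a).map some

theorem iterate_markedSubst (hφ : φ a₁ = a₁ :: v) (j : ℕ) :
    (applyMorph (markedSubst φ v))^[j] [none] =
      none :: ((applyMorph φ)^[j] [a₁]).tail.map some := by
  induction j with
  | zero => rfl
  | succ j ih =>
    rw [Function.iterate_succ_apply', ih, tail_iterate_succ_singleton hφ]
    simp [markedSubst, applyMorph_map, map_applyMorph, Function.comp_def, -List.map_tail]

theorem applyMorph_iterate_tail_eq_markedSubst (hφ : φ a₁ = a₁ :: v) (ψ : A → List B)
    (k j : ℕ) :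
    applyMorph ψ ((applyMorph φ)^[k] ((applyMorph φ)^[j] [a₁]).tail) =
      applyMorph (fun o => o.elim [] fun a => applyMorph ψ ((applyMorph φ)^[k] [a]))
        ((applyMorph (markedSubst φ v))^[j] [none]) := by
  rw [iterate_markedSubst hφ, applyMorph_iterate_eq]
  simp [applyMorph_map, applyMorph_applyMorph, Function.comp_def, -List.map_tail]

end Prolongable

section MorphicWords

variable {A B : Type*} [Fintype A] {φ : A → List A} {ψ : A → List B} {a₁ : A} {v : List A}
  {W : ℕ → B}

theorem factorOf_iff_infix_iterate (hφ : φ a₁ = a₁ :: v) (hW : IsMorphicWord φ ψ a₁ W)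
    (u : List B) :
    FactorOf u W ↔ u <:+: applyMorph ψ ((applyMorph φ)^[stateBound A u.length] [a₁]) := by
  rw [factorOf_iff_exists_infix hW.2 hW.1]
  exact exists_infix_iterate_iff_of_infix_applyMorph φ ψ u
    (by simpa [hφ] using (List.prefix_append [a₁] v).isInfix)

theorem infinite_occursAt_iff_infix_iterate (hφ : φ a₁ = a₁ :: v) (hW : IsMorphicWord φ ψ a₁ W)
    (u : List B) :
    {i | OccursAt u W i}.Infinite ↔
      u <:+: applyMorph ψ ((applyMorph φ)^[stateBound A u.length]
        ((applyMorph φ)^[stateBound (Option A) u.length] [a₁]).tail) := by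
  have hsplit (k j : ℕ) : applyMorph ψ ((applyMorph φ)^[k + j] [a₁]) =
      applyMorph ψ ((applyMorph φ)^[k] [a₁]) ++
        applyMorph ψ ((applyMorph φ)^[k] ((applyMorph φ)^[j] [a₁]).tail) := by
    rw [iterate_add_singleton hφ, applyMorph_append]
  rw [infinite_occursAt_iff (fun k j => hsplit k j ▸ hW.2 (k + j)) hW.1 fun k N => ?_]
  · rw [forall_exists_infix_iterate_iff_of_applyMorph_infix φ ψ u _ fun j =>
      ⟨j + 1, tail_iterate_succ_singleton hφ j ▸ (List.suffix_append _ _).isInfix⟩]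
    simp only [applyMorph_iterate_tail_eq_markedSubst hφ]
    exact exists_infix_iterate_iff_of_infix_applyMorph _ _ u
      (by simpa [markedSubst] using (List.prefix_append [none] (v.map some)).isInfix)
  · obtain ⟨j, hj⟩ := hW.1 N
    refine ⟨j, hj.trans ?_⟩
    rw [← hsplit, add_comm, hsplit]
    simp

end MorphicWords

section Computability

open Primrec

variable {α β : Type*} [Primcodable α] [Primcodable β]

theorem primrecRel_isInfix [DecidableEq β] : PrimrecRel (· <:+: · : List β → List β → Prop) := by
  have hslice :
      PrimrecRel fun (i : ℕ) (q : List β × List β) => q.1 = (q.2.drop i).take q.1.length :=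
    Primrec.eq.comp (fst.comp snd) (list_take.comp (list_length.comp (fst.comp snd))
      (list_drop.comp fst (snd.comp snd)))
  exact (hslice.exists_mem_list.comp (list_range.comp (succ.comp (list_length.comp snd)))
    Primrec.id).of_eq fun _ => List.infix_iff_exists_take_drop.symm

theorem primrec_applyMorph {m : ℕ} :
    Primrec₂ (applyMorph : (Fin m → List β) → List (Fin m) → List β) :=
  (list_flatMap snd (fin_app.comp (fst.comp fst) snd).to₂).of_eq fun _ => rfl

theorem primrec_applyMorph_iterate {m : ℕ} {φ : α → Fin m → List (Fin m)} {k : α → ℕ}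
    {w : α → List (Fin m)} (hφ : Primrec φ) (hk : Primrec k) (hw : Primrec w) :
    Primrec fun a => (applyMorph (φ a))^[k a] (w a) :=
  nat_iterate hk hw (primrec_applyMorph.comp (hφ.comp fst) snd).to₂

theorem primrec_stateBound (A : Type*) [Fintype A] : Primrec (stateBound A) :=
  nat_mul.comp (const _) ((Primrec₂.unpaired'.1 Nat.Primrec.pow).comp (const _) succ)

end Computability

section Deciders

variable {m n : ℕ}

def decideFactor (a₁ : Fin m)
    (p : (Fin m → List (Fin m)) × (Fin m → List (Fin n)) × List (Fin n)) : Bool :=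
  decide (p.2.2 <:+: applyMorph p.2.1 ((applyMorph p.1)^[stateBound (Fin m) p.2.2.length] [a₁]))

def decideInfinitelyOften (a₁ : Fin m)
    (p : (Fin m → List (Fin m)) × (Fin m → List (Fin n)) × List (Fin n)) : Bool :=
  decide (p.2.2 <:+: applyMorph p.2.1 ((applyMorph p.1)^[stateBound (Fin m) p.2.2.length]
    ((applyMorph p.1)^[stateBound (Option (Fin m)) p.2.2.length] [a₁]).tail))

open Primrec in
theorem primrec_decideFactor (a₁ : Fin m) : Primrec (decideFactor (n := n) a₁) :=
  primrecRel_isInfix.decide.comp (snd.comp snd) (primrec_applyMorph.comp (fst.comp snd)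
    (primrec_applyMorph_iterate fst ((primrec_stateBound _).comp (list_length.comp (snd.comp snd)))
      (const _)))

open Primrec in
theorem primrec_decideInfinitelyOften (a₁ : Fin m) :
    Primrec (decideInfinitelyOften (n := n) a₁) :=
  primrecRel_isInfix.decide.comp (snd.comp snd) (primrec_applyMorph.comp (fst.comp snd)
    (primrec_applyMorph_iterate fst ((primrec_stateBound _).comp (list_length.comp (snd.comp snd)))
      (list_tail.comp (primrec_applyMorph_iterate fst
        ((primrec_stateBound _).comp (list_length.comp (snd.comp snd))) (const _)))))

end Deciders

/-- decidability of the factor problem and of the "infinitely many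
occurrences" problem for morphic words. -/
theorem factor_problems_of_morphic_words_decidable (m n : ℕ) (a₁ : Fin m) :
    ∃ f₁ f₂ : (Fin m → List (Fin m)) × (Fin m → List (Fin n)) × List (Fin n) → Bool,
      Computable f₁ ∧ Computable f₂ ∧
      ∀ (φ : Fin m → List (Fin m)) (ψ : Fin m → List (Fin n)) (u : List (Fin n))
        (W : ℕ → Fin n),
        Prolongable φ a₁ → IsMorphicWord φ ψ a₁ W →
        ((f₁ (φ, ψ, u) = true ↔ FactorOf u W) ∧
         (f₂ (φ, ψ, u) = true ↔ {i : ℕ | OccursAt u W i}.Infinite)) := by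
  refine ⟨decideFactor a₁, decideInfinitelyOften a₁, (primrec_decideFactor a₁).to_comp,
    (primrec_decideInfinitelyOften a₁).to_comp, ?_⟩
  rintro φ ψ u W ⟨v, hφ, -⟩ hW
  simp only [decideFactor, decideInfinitelyOften, decide_eq_true_iff]
  exact ⟨(factorOf_iff_infix_iterate hφ hW u).symm,
    (infinite_occursAt_iff_infix_iterate hφ hW u).symm⟩
end

section
/- Let W : ℕ → A be a uniformly recurrent infinite word and U a nonempty finite word such that for every k : ℕ the k-fold concatenation U^k is a factor of W. Then every factor of W of length U.length is a cyclic shift of U, and W is purely periodic with the period equal to its prefix of length U.length (in particular ∀ i, W (i + U.length) = W i). -/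
/-! Uniform recurrence puts every factor of `W` inside every long enough factor of `W`, in
particular inside a long power `U^k`, so every factor of `W` is a factor of the periodic word
`U^ω`. Factors of `U^ω` of length `|U|` are rotations of `U`, and a factor of length `|U| + 1`
starts and ends with the same letter, which gives `W (i + |U|) = W i`. -/

theorem FactorOf.of_infix {A : Type*} {u v : List A} {W : ℕ → A} (huv : u <:+: v)
    (hv : FactorOf v W) : FactorOf u W := by
  obtain ⟨s, t, rfl⟩ := huv
  obtain ⟨i, hi⟩ := hv
  refine ⟨i + s.length, fun j hj => ?_⟩
  have := hi (s.length + j) (by simp only [List.append_assoc, List.length_append]; omega)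
  simp only [List.get_eq_getElem, List.append_assoc] at this ⊢
  rw [List.getElem_append_right (by omega), List.getElem_append_left (by omega)] at this
  simpa [Nat.add_assoc] using this

theorem UniformlyRecurrent.factorOf_of_common_factors {A : Type*} {W Y : ℕ → A}
    (hW : UniformlyRecurrent W)
    (hcommon : ∀ N, ∃ w : List A, N ≤ w.length ∧ FactorOf w W ∧ FactorOf w Y)
    {v : List A} (hv : FactorOf v W) : FactorOf v Y := by
  obtain ⟨N, hN⟩ := hW v hv
  obtain ⟨w, hNw, hwW, hwY⟩ := hcommon N
  have hpre : w.take N <:+: w := (List.take_prefix N w).isInfix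
  have hvw : v <:+: w.take N := hN _ (hwW.of_infix hpre) (by simp [hNw])
  exact (hwY.of_infix hpre).of_infix hvw

theorem PurelyPeriodicWith.prefixOf_flatten_replicate {A : Type*} {Y : ℕ → A} {U : List A}
    (hY : PurelyPeriodicWith Y U) (k : ℕ) : PrefixOf (List.replicate k U).flatten Y := by
  obtain ⟨_, hY⟩ := hY
  have hrepeat : (List.replicate k U).flatten = List.ofFn (Fin.repeat k U.get) := by simp
  unfold PrefixOf
  rw [hrepeat]
  intro j hj
  simp only [hY, List.get_eq_getElem, List.getElem_ofFn, Fin.repeat_apply, Fin.modNat, zero_add]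

theorem PurelyPeriodicWith.periodic {A : Type*} {Y : ℕ → A} {U : List A}
    (hY : PurelyPeriodicWith Y U) : Function.Periodic Y U.length := by
  obtain ⟨_, hY⟩ := hY
  intro i
  simp [hY]

theorem isCyclicShift_rotate {A : Type*} (U : List A) (n : ℕ) : IsCyclicShift (U.rotate n) U :=
  ⟨_, _, (List.take_append_drop (n % U.length) U).symm, List.rotate_eq_drop_append_take_mod⟩

theorem PurelyPeriodicWith.isCyclicShift {A : Type*} {Y : ℕ → A} {U v : List A}
    (hY : PurelyPeriodicWith Y U) (hv : FactorOf v Y) (hlen : v.length = U.length) :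
    IsCyclicShift v U := by
  obtain ⟨_, hY⟩ := hY
  obtain ⟨p, hp⟩ := hv
  suffices v = U.rotate p from this ▸ isCyclicShift_rotate U p
  refine List.ext_getElem (by simp [hlen]) fun j hj _ => ?_
  simpa [hY, Nat.add_comm] using (hp j hj).symm

theorem Function.Periodic.of_forall_factorOf {A : Type*} {W Y : ℕ → A} {n : ℕ}
    (hY : Function.Periodic Y n) (h : ∀ v, FactorOf v W → FactorOf v Y) :
    Function.Periodic W n := by
  intro i
  let v := List.ofFn fun j : Fin (n + 1) => W (i + j)
  obtain ⟨p, hp⟩ := h v ⟨i, fun j hj => by simp only [v, List.get_eq_getElem, List.getElem_ofFn]⟩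
  have h0 := hp 0 (by simp [v])
  have hn := hp n (by simp [v])
  simp only [List.get_eq_getElem, List.getElem_ofFn, v, Nat.add_zero] at h0 hn
  rw [← hn, hY, ← h0]

theorem Function.Periodic.purelyPeriodicWith_ofFn {A : Type*} {W : ℕ → A} {n : ℕ}
    (hW : Function.Periodic W n) (hn : 0 < n) :
    PurelyPeriodicWith W (List.ofFn fun i : Fin n => W i) := by
  refine ⟨by simp [List.ofFn_eq_nil_iff]; omega, fun i => ?_⟩
  simp [hW.map_mod_nat i]

/-- if a uniformly recurrent word contains all powers of a nonempty
word `U`, then all its factors of length `|U|` are cyclic shifts of `U` and the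
word is purely periodic with period its prefix of length `|U|`. -/
theorem purely_periodic_of_unifRec_powers {A : Type*} (W : ℕ → A) (U : List A)
    (hU : U ≠ []) (hur : UniformlyRecurrent W)
    (hpow : ∀ k : ℕ, FactorOf (List.replicate k U).flatten W) :
    (∀ v : List A, FactorOf v W → v.length = U.length → IsCyclicShift v U) ∧
    PurelyPeriodicWith W (List.ofFn fun i : Fin U.length => W i) ∧
    (∀ i : ℕ, W (i + U.length) = W i) := by
  have hUlen : 0 < U.length := List.length_pos_iff.mpr hU
  obtain ⟨Y, hY⟩ : ∃ Y : ℕ → A, PurelyPeriodicWith Y U :=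
    ⟨fun i => U.get ⟨i % U.length, Nat.mod_lt i hUlen⟩, hU, fun _ => rfl⟩
  have hfactor : ∀ v, FactorOf v W → FactorOf v Y := fun v =>
    hur.factorOf_of_common_factors fun N =>
      ⟨(List.replicate N U).flatten, by simpa using Nat.le_mul_of_pos_right N hUlen, hpow N,
        ⟨0, hY.prefixOf_flatten_replicate N⟩⟩
  have hper : Function.Periodic W U.length := hY.periodic.of_forall_factorOf hfactor
  exact ⟨fun v hv => hY.isCyclicShift (hfactor v hv), hper.purelyPeriodicWith_ofFn hUlen, hper⟩
end
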